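/- arXiv:2505.09165 — 3 statements merged into one kernel-verified Lean document; each statement's English description precedes it below -/
import Mathlib

section
/- Capacity-scaling preserves solvability: let d ≥ 1, and given a configuration (G, Q, S) in which all buses have capacity 1, define (G_d, Q_d, S_d) by giving every bus in G_d capacity d (same underlying graph and colors), replacing each passenger of Q by d consecutive copies of the same color, and multiplying the remaining seats of each occupied spot of S by d. Then (G, Q, S) is solvable if and only if (G_d, Q_d, S_d) is solvable. -/
/-- A Bus Out configuration: a congestion graph (vertex set `V`, blocking
relation `edge`, labels `(color, capacity)`), a passenger queue `Q` (list of
colors), and a tuple `S` of parking spots, each empty (`none`) or holding a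
bus `(color, remaining seats)`. -/
structure Config where
  V : Finset ℕ
  edge : ℕ → ℕ → Bool
  label : ℕ → ℕ × ℕ
  Q : List ℕ
  S : List (Option (ℕ × ℕ))

/-- A bus is free if no bus in the graph blocks it (out-degree zero). -/
def Config.Free (C : Config) (v : ℕ) : Prop :=
  v ∈ C.V ∧ ∀ w ∈ C.V, ¬ C.edge v w

/-- Player transition: move a free bus onto an empty spot. -/
def PlayerStep (C C' : Config) : Prop :=
  ∃ v i, C.Free v ∧ C.S[(i : ℕ)]? = some none ∧
    C' = { C with V := C.V.erase v, S := C.S.set i (some (C.label v)) }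

/-- Automatic transition: the head passenger boards a matching-colored bus on
a spot; the bus departs (spot becomes empty) when it has no seat left. -/
def AutoStep (C C' : Config) : Prop :=
  ∃ x Q' i k, C.Q = x :: Q' ∧ C.S[(i : ℕ)]? = some (some (x, k)) ∧
    C' = { C with Q := Q', S := C.S.set i (if k ≤ 1 then none else some (x, k - 1)) }

def AutoApplicable (C : Config) : Prop := ∃ C', AutoStep C C'

/-- A transition: automatic transitions are forced before player moves. -/
def Step (C C' : Config) : Prop :=
  (¬ AutoApplicable C ∧ PlayerStep C C') ∨ AutoStep C C'

/-- The empty configuration: no buses, no passengers, all spots empty. -/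
def Config.IsEmpty (C : Config) : Prop :=
  C.V = ∅ ∧ C.Q = [] ∧ ∀ sp ∈ C.S, sp = none

/-- Solvable: the empty configuration is reachable by transitions. -/
def Solvable (C : Config) : Prop :=
  ∃ C', Relation.ReflTransGen Step C C' ∧ C'.IsEmpty

/-- Acyclicity of the congestion graph (restricted to its vertex set). -/
def Config.Acyclic (C : Config) : Prop :=
  ∀ v, ¬ Relation.TransGen (fun u w => u ∈ C.V ∧ w ∈ C.V ∧ C.edge u w) v v

/-- Remaining seats of color `x` offered by a parking spot. -/
def spotSeats (x : ℕ) (sp : Option (ℕ × ℕ)) : ℕ :=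
  match sp with
  | some (y, k) => if y = x then k else 0
  | none => 0

/-- Total remaining capacity of color `x` over buses in the graph and spots. -/
def Config.capOf (C : Config) (x : ℕ) : ℕ :=
  (C.V.filter (fun v => (C.label v).1 = x)).sum (fun v => (C.label v).2)
  + (C.S.map (spotSeats x)).sum

/-- Eligibility: acyclic graph and, for every color, the number of passengers
equals the total remaining capacity of buses of that color. -/
def Config.Eligible (C : Config) : Prop :=
  C.Acyclic ∧ ∀ x, C.Q.count x = C.capOf x

/-- Well-formedness: all capacities / remaining seat counts are positive. -/
def Config.WF (C : Config) : Prop :=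
  (∀ v ∈ C.V, 1 ≤ (C.label v).2) ∧ ∀ sp ∈ C.S, ∀ x k, sp = some (x, k) → 1 ≤ k

/-- Colors occurring in the configuration (buses, queue, and spots). -/
def colorSet (C : Config) : Finset ℕ :=
  (C.V.image fun v => (C.label v).1) ∪ C.Q.toFinset
    ∪ ((C.S.filterMap id).map Prod.fst).toFinset

/-- Scaling a configuration by `d`: every bus capacity is multiplied by `d`,
each passenger is replaced by `d` consecutive copies of the same color, and
the remaining seats of each occupied spot are multiplied by `d`. -/
def scaleC (d : ℕ) (C : Config) : Config :=
  { C with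
    label := fun v => ((C.label v).1, d * (C.label v).2),
    Q := C.Q.flatMap fun x => List.replicate d x,
    S := C.S.map (Option.map fun p => (p.1, d * p.2)) }

-- helpers
def blocks (d : ℕ) (Q : List ℕ) : List ℕ := Q.flatMap fun x => List.replicate d x

lemma blocks_cons (d x : ℕ) (Q : List ℕ) :
    blocks d (x :: Q) = List.replicate d x ++ blocks d Q := by simp [blocks]

lemma blocks_cons' (d x : ℕ) (Q : List ℕ) (hd : 1 ≤ d) :
    blocks d (x :: Q) = x :: (List.replicate (d - 1) x ++ blocks d Q) := by
  cases d with
  | zero => omega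
  | succ e => simp [blocks_cons, List.replicate_succ]

def seats : Option (ℕ × ℕ) → ℕ
  | some p => p.2
  | none => 0

@[simp] lemma seats_none : seats none = 0 := rfl
@[simp] lemma seats_some (p : ℕ × ℕ) : seats (some p) = p.2 := rfl
@[simp] lemma spotSeats_none (x : ℕ) : spotSeats x none = 0 := rfl
@[simp] lemma spotSeats_some (x : ℕ) (p : ℕ × ℕ) :
    spotSeats x (some p) = if p.1 = x then p.2 else 0 := by cases p; rfl

def totS (x : ℕ) (S : List (Option (ℕ × ℕ))) : ℕ := (S.map (spotSeats x)).sum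
def ssum (S : List (Option (ℕ × ℕ))) : ℕ := (S.map seats).sum

lemma sum_map_set {α : Type} (f : α → ℕ) :
    ∀ (l : List α) (n : ℕ) (a : α), l[n]? = some a → ∀ b : α,
      ((l.set n b).map f).sum + f a = (l.map f).sum + f b := by
  intro l
  induction l with
  | nil => intro n a h; simp at h
  | cons c t ih =>
    intro n a h b
    cases n with
    | zero =>
      rw [List.getElem?_cons_zero] at h
      injection h with h; subst h
      simp only [List.set_cons_zero, List.map_cons, List.sum_cons]
      omega
    | succ m =>
      rw [List.getElem?_cons_succ] at h
      have := ih m a h b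
      simp only [List.set_cons_succ, List.map_cons, List.sum_cons]
      omega

lemma le_sum_of_get {α : Type} (f : α → ℕ) {l : List α} {n : ℕ} {a : α}
    (h : l[n]? = some a) : f a ≤ (l.map f).sum := by
  have hm : a ∈ l := List.mem_of_getElem? h
  exact List.single_le_sum (fun x _ => Nat.zero_le x) _ (List.mem_map_of_mem hm)

lemma exists_pos_of_sum_pos {α : Type} (f : α → ℕ) {l : List α}
    (h : 0 < (l.map f).sum) : ∃ a ∈ l, 0 < f a := by
  by_contra hc
  push_neg at hc
  have : (l.map f).sum = 0 := by
    apply List.sum_eq_zero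
    intro x hx
    rw [List.mem_map] at hx
    obtain ⟨a, ha, rfl⟩ := hx
    exact Nat.le_zero.mp (hc a ha)
  omega

lemma sum_ones {α : Type} (f : α → ℕ) {l : List α} (h : ∀ a ∈ l, f a = 1) :
    (l.map f).sum = l.length := by
  induction l with
  | nil => simp
  | cons c t ih =>
    simp only [List.map_cons, List.sum_cons, List.length_cons]
    rw [h c (by simp), ih (fun a ha => h a (by simp [ha]))]
    omega

lemma sum_le_mul {α : Type} (f : α → ℕ) (d : ℕ) :
    ∀ (l : List α), (∀ a ∈ l, f a ≤ d) → (l.map f).sum ≤ d * l.length := by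
  intro l
  induction l with
  | nil => simp
  | cons c t ih =>
    intro h
    have h1 := ih (fun a ha => h a (by simp [ha]))
    have h2 := h c (by simp)
    simp only [List.map_cons, List.sum_cons, List.length_cons, Nat.mul_succ]
    omega

lemma sum_add_le_of_zero {α : Type} (f : α → ℕ) (d : ℕ) :
    ∀ (l : List α) (n : ℕ) (a : α), l[n]? = some a → f a = 0 →
      (∀ b ∈ l, f b ≤ d) → (l.map f).sum + d ≤ d * l.length := by
  intro l
  induction l with
  | nil => intro n a h; simp at h
  | cons c t ih =>
    intro n a h hfa hle
    cases n with
    | zero =>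
      rw [List.getElem?_cons_zero] at h
      injection h with h; subst h
      have h1 := sum_le_mul f d t (fun b hb => hle b (by simp [hb]))
      simp only [List.map_cons, List.sum_cons, List.length_cons, Nat.mul_succ]
      omega
    | succ m =>
      rw [List.getElem?_cons_succ] at h
      have h1 := ih m a h hfa (fun b hb => hle b (by simp [hb]))
      have h2 := hle c (by simp)
      simp only [List.map_cons, List.sum_cons, List.length_cons, Nat.mul_succ]
      omega

lemma lt_of_get?_eq_some {α : Type} {l : List α} {n : ℕ} {a : α}
    (h : l[n]? = some a) : n < l.length := by
  by_contra hc
  rw [List.getElem?_eq_none_iff.2 (by omega)] at h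
  simp at h

lemma exists_spot_of_totS_pos {x : ℕ} {S : List (Option (ℕ × ℕ))} (h : 0 < totS x S) :
    ∃ i k, S[(i : ℕ)]? = some (some (x, k)) := by
  obtain ⟨sp, hm, hpos⟩ := exists_pos_of_sum_pos (spotSeats x) h
  rcases sp with _ | ⟨y, k⟩
  · simp at hpos
  · have hyx : y = x := by by_contra hne; simp [hne] at hpos
    subst hyx
    obtain ⟨i, hi⟩ := List.getElem?_of_mem hm
    exact ⟨i, k, hi⟩

lemma autoApp_iff (C : Config) :
    AutoApplicable C ↔ ∃ x Q' i k, C.Q = x :: Q' ∧ C.S[(i : ℕ)]? = some (some (x, k)) := by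
  constructor
  · rintro ⟨C', x, Q', i, k, h1, h2, _⟩; exact ⟨x, Q', i, k, h1, h2⟩
  · rintro ⟨x, Q', i, k, h1, h2⟩; exact ⟨_, x, Q', i, k, h1, h2, rfl⟩

lemma auto_of_spot_pos {C : Config} {x : ℕ} {L : List ℕ} (hQ : C.Q = x :: L)
    (h : 0 < totS x C.S) : AutoApplicable C := by
  rw [autoApp_iff]
  obtain ⟨i, k, hi⟩ := exists_spot_of_totS_pos h
  exact ⟨x, L, i, k, hQ, hi⟩

lemma sum_map_mul {α : Type} (d : ℕ) (f : α → ℕ) (l : List α) :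
    (l.map fun a => d * f a).sum = d * (l.map f).sum := by
  induction l with
  | nil => simp
  | cons a t ih => simp [ih, Nat.mul_add]

lemma totS_scale (d x : ℕ) (S : List (Option (ℕ × ℕ))) :
    totS x (S.map (Option.map fun p => (p.1, d * p.2))) = d * totS x S := by
  unfold totS
  rw [List.map_map]
  have : (spotSeats x ∘ Option.map fun p => (p.1, d * p.2))
      = fun sp => d * spotSeats x sp := by
    funext sp
    rcases sp with _ | ⟨y, k⟩
    · simp
    · by_cases h : y = x <;> simp [h]
  rw [this, sum_map_mul]

lemma ssum_scale (d : ℕ) (S : List (Option (ℕ × ℕ))) :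
    ssum (S.map (Option.map fun p => (p.1, d * p.2))) = d * ssum S := by
  unfold ssum
  rw [List.map_map]
  have : (seats ∘ Option.map fun p => (p.1, d * p.2)) = fun sp => d * seats sp := by
    funext sp
    rcases sp with _ | ⟨y, k⟩ <;> simp
  rw [this, sum_map_mul]

lemma blocks_eq_cons {d : ℕ} (hd : 1 ≤ d) {Q : List ℕ} {x : ℕ} {L : List ℕ}
    (h : blocks d Q = x :: L) :
    ∃ Q', Q = x :: Q' ∧ L = List.replicate (d - 1) x ++ blocks d Q' := by
  cases Q with
  | nil => simp [blocks] at h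
  | cons y Q' =>
    rw [blocks_cons' d y Q' hd] at h
    injection h with h1 h2
    subst h1
    exact ⟨Q', rfl, h2.symm⟩

lemma auto_chain : ∀ (m : ℕ), 1 ≤ m → ∀ (D : Config) (x : ℕ) (T : List ℕ) (i : ℕ),
    D.Q = List.replicate m x ++ T → D.S[i]? = some (some (x, m)) →
    Relation.ReflTransGen Step D { D with Q := T, S := D.S.set i none } := by
  intro m
  induction m with
  | zero => omega
  | succ m ih =>
    intro _ D x T i hQ hS
    rcases Nat.eq_zero_or_pos m with hm | hm
    · subst hm
      apply Relation.ReflTransGen.single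
      right
      refine ⟨x, T, i, 1, ?_, hS, ?_⟩
      · simpa [List.replicate_succ] using hQ
      · simp
    · have hlt : i < D.S.length := lt_of_get?_eq_some hS
      have hstep : Step D { D with Q := List.replicate m x ++ T, S := D.S.set i (some (x, m)) } := by
        right
        refine ⟨x, List.replicate m x ++ T, i, m + 1, ?_, hS, ?_⟩
        · rw [hQ, List.replicate_succ]; rfl
        · have h1 : ¬ (m + 1 ≤ 1) := by omega
          simp [h1]
      refine Relation.ReflTransGen.head hstep ?_
      have h2 := ih hm { D with Q := List.replicate m x ++ T, S := D.S.set i (some (x, m)) }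
        x T i rfl (List.getElem?_set_self (by simpa using hlt))
      simpa [List.set_set] using h2

lemma fsim (d : ℕ) (hd : 1 ≤ d) (A A' : Config)
    (hcap : ∀ v ∈ A.V, (A.label v).2 = 1)
    (hunit : ∀ sp ∈ A.S, ∀ p, sp = some p → p.2 = 1)
    (h : Step A A') :
    ((∀ v ∈ A'.V, (A'.label v).2 = 1) ∧ (∀ sp ∈ A'.S, ∀ p, sp = some p → p.2 = 1))
    ∧ Relation.ReflTransGen Step (scaleC d A) (scaleC d A') := by
  rcases h with ⟨hna, v, i, hfree, hemp, rfl⟩ | ⟨x, Q', i, k, hQ, hS, rfl⟩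
  · constructor
    · constructor
      · intro w hw
        exact hcap w (Finset.mem_of_mem_erase hw)
      · intro sp hsp p hp
        rcases List.mem_or_eq_of_mem_set hsp with h1 | h1
        · exact hunit sp h1 p hp
        · rw [h1] at hp
          injection hp with hp
          rw [← hp]
          exact hcap v hfree.1
    · apply Relation.ReflTransGen.single
      left
      constructor
      · intro happ
        rw [autoApp_iff] at happ
        obtain ⟨x, Q', i', k, hq1, hq2⟩ := happ
        apply hna
        rw [autoApp_iff]
        obtain ⟨Q0, hQ0, _⟩ := blocks_eq_cons hd (show blocks d A.Q = x :: Q' from hq1)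
        have hget : (A.S[i']?).map (Option.map fun p => (p.1, d * p.2)) = some (some (x, k)) := by
          rw [← List.getElem?_map]; exact hq2
        rcases hsp : A.S[i']? with _ | sp
        · rw [hsp] at hget; simp at hget
        · rw [hsp] at hget
          rcases sp with _ | ⟨y, k'⟩
          · simp at hget
          · simp only [Option.map_some, Option.some.injEq] at hget
            have hyx : y = x := by
              have := congrArg Prod.fst hget; simpa using this
            subst hyx
            exact ⟨y, Q0, i', k', hQ0, hsp⟩
      · refine ⟨v, i, hfree, ?_, ?_⟩
        · show ((A.S.map _)[i]?) = some none
          rw [List.getElem?_map, hemp]; rfl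
        · simp [scaleC, List.map_set]
  · have hk : k = 1 := hunit _ (List.mem_of_getElem? hS) _ rfl
    subst hk
    constructor
    · refine ⟨hcap, ?_⟩
      intro sp hsp p hp
      rcases List.mem_or_eq_of_mem_set hsp with h1 | h1
      · exact hunit sp h1 p hp
      · rw [h1] at hp; simp at hp
    · have hchain := auto_chain d hd (scaleC d A) x (blocks d Q') i
        (by show blocks d A.Q = _; rw [hQ, blocks_cons])
        (by show ((A.S.map _)[i]?) = _; rw [List.getElem?_map, hS]; simp)
      have hfin : ({ (scaleC d A) with Q := blocks d Q', S := (scaleC d A).S.set i none } : Config) = scaleC d { A with Q := Q', S := A.S.set i (if 1 ≤ 1 then none else some (x, 1 - 1)) } := by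
        simp [scaleC, List.map_set, blocks]
      rw [← hfin]
      exact hchain

lemma fmany (d : ℕ) (hd : 1 ≤ d) {A B : Config}
    (hcap : ∀ v ∈ A.V, (A.label v).2 = 1)
    (hunit : ∀ sp ∈ A.S, ∀ p, sp = some p → p.2 = 1)
    (h : Relation.ReflTransGen Step A B) :
    ((∀ v ∈ B.V, (B.label v).2 = 1) ∧ (∀ sp ∈ B.S, ∀ p, sp = some p → p.2 = 1))
    ∧ Relation.ReflTransGen Step (scaleC d A) (scaleC d B) := by
  induction h with
  | refl => exact ⟨⟨hcap, hunit⟩, Relation.ReflTransGen.refl⟩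
  | tail hab hbc ih =>
    obtain ⟨⟨h1, h2⟩, h3⟩ := ih
    obtain ⟨⟨g1, g2⟩, g3⟩ := fsim d hd _ _ h1 h2 hbc
    exact ⟨⟨g1, g2⟩, h3.trans g3⟩

structure SimRel (d : ℕ) (A D : Config) : Prop where
  hV : D.V = A.V
  hE : D.edge = A.edge
  hL : D.label = fun v => ((A.label v).1, d * (A.label v).2)
  hcap : ∀ v ∈ A.V, (A.label v).2 = 1
  hunit : ∀ sp ∈ A.S, ∀ p, sp = some p → p.2 = 1
  hbnd : ∀ sp ∈ D.S, ∀ p, sp = some p → 1 ≤ p.2 ∧ p.2 ≤ d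
  hlen : D.S.length = A.S.length
  hq : (D.Q = blocks d A.Q ∧ (∀ y, totS y D.S = d * totS y A.S) ∧ ssum D.S = d * ssum A.S)
     ∨ (∃ x r, 1 ≤ r ∧ r < d ∧ D.Q = List.replicate r x ++ blocks d A.Q
         ∧ totS x D.S = d * totS x A.S + r
         ∧ (∀ y, y ≠ x → totS y D.S = d * totS y A.S)
         ∧ ssum D.S = d * ssum A.S + r)

lemma bsim_player (d : ℕ) (hd : 1 ≤ d) {A D : Config} (h : SimRel d A D)
    (hna : ¬ AutoApplicable D) {v i : ℕ} (hfree : D.Free v) (hemp : D.S[i]? = some none) :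
    ∃ A', Relation.ReflTransGen Step A A'
      ∧ SimRel d A' { D with V := D.V.erase v, S := D.S.set i (some (D.label v)) } := by
  have hb : D.Q = blocks d A.Q ∧ (∀ y, totS y D.S = d * totS y A.S)
      ∧ ssum D.S = d * ssum A.S := by
    rcases h.hq with hb | ⟨x, r, hr1, hrd, hmid, ht, _, _⟩
    · exact hb
    · exfalso
      obtain ⟨r', rfl⟩ : ∃ r', r = r' + 1 := ⟨r - 1, by omega⟩
      rw [List.replicate_succ] at hmid
      exact hna (auto_of_spot_pos (by simpa using hmid) (by omega))
  obtain ⟨hbQ, htot, hss⟩ := hb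
  have hvA : v ∈ A.V := h.hV ▸ hfree.1
  have hAfree : A.Free v := by
    obtain ⟨h1, h2⟩ := hfree
    rw [h.hV] at h1
    refine ⟨h1, fun w hw => ?_⟩
    have := h2 w (by rw [h.hV]; exact hw)
    rwa [h.hE] at this
  -- empty spot in A
  have hAspot : ∃ j, A.S[(j : ℕ)]? = some none := by
    by_contra hc
    push_neg at hc
    have hall : ∀ sp ∈ A.S, seats sp = 1 := by
      intro sp hsp
      rcases sp with _ | p
      · obtain ⟨j, hj⟩ := List.getElem?_of_mem hsp; exact absurd hj (hc j)
      · simpa using h.hunit _ hsp p rfl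
    have hA : ssum A.S = A.S.length := sum_ones _ hall
    have hDle : ssum D.S + d ≤ d * D.S.length := by
      apply sum_add_le_of_zero seats d D.S i none hemp rfl
      intro sp hsp
      rcases sp with _ | p
      · simp
      · simpa using (h.hbnd _ hsp p rfl).2
    rw [hss, hA, h.hlen] at hDle
    omega
  obtain ⟨j, hj⟩ := hAspot
  -- no auto move in A
  have hnaA : ¬ AutoApplicable A := by
    intro happ
    rw [autoApp_iff] at happ
    obtain ⟨x, Q'', i', k, hAQ, hAS⟩ := happ
    apply hna
    have hk1 : k = 1 := h.hunit _ (List.mem_of_getElem? hAS) _ rfl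
    have hle := le_sum_of_get (spotSeats x) hAS
    simp [hk1] at hle
    have hpos : 0 < totS x A.S := by
      have : (1 : ℕ) ≤ totS x A.S := hle
      omega
    have hposD : 0 < totS x D.S := by
      rw [htot x]
      exact Nat.mul_pos (by omega) hpos
    exact auto_of_spot_pos (by rw [hbQ, hAQ, blocks_cons' d x Q'' hd]) hposD
  refine ⟨{ A with V := A.V.erase v, S := A.S.set j (some (A.label v)) },
    Relation.ReflTransGen.single (Or.inl ⟨hnaA, v, j, hAfree, hj, rfl⟩), ?_⟩
  have hlv : D.label v = ((A.label v).1, d * (A.label v).2) := by rw [h.hL]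
  have hc1 : (A.label v).2 = 1 := h.hcap v hvA
  refine ⟨by rw [h.hV], h.hE, h.hL, ?_, ?_, ?_, ?_, ?_⟩
  · intro w hw; exact h.hcap w (Finset.mem_of_mem_erase hw)
  · intro sp hsp p hp
    rcases List.mem_or_eq_of_mem_set hsp with h1 | h1
    · exact h.hunit sp h1 p hp
    · rw [h1] at hp; injection hp with hp; rw [← hp]; exact hc1
  · intro sp hsp p hp
    rcases List.mem_or_eq_of_mem_set hsp with h1 | h1
    · exact h.hbnd sp h1 p hp
    · rw [h1] at hp
      injection hp with hp
      rw [← hp, hlv, hc1]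
      simp
      omega
  · simp [h.hlen]
  · left
    refine ⟨hbQ, ?_, ?_⟩
    · intro y
      have eD := sum_map_set (spotSeats y) D.S i none hemp (some (D.label v))
      have eA := sum_map_set (spotSeats y) A.S j none hj (some (A.label v))
      show totS y (D.S.set i (some (D.label v))) = d * totS y (A.S.set j (some (A.label v)))
      by_cases hxy : (A.label v).1 = y
      · have sD : spotSeats y (some (D.label v)) = d := by
          rw [hlv]; simp [hxy, hc1]
        have sA : spotSeats y (some (A.label v)) = 1 := by simp [hxy, hc1]
        rw [sD] at eD; rw [sA] at eA
        simp only [spotSeats_none] at eD eA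
        have eA' : totS y (A.S.set j (some (A.label v))) = totS y A.S + 1 := by
          unfold totS; omega
        have eD' : totS y (D.S.set i (some (D.label v))) = totS y D.S + d := by
          unfold totS; omega
        rw [eD', eA', htot y]
        ring
      · have sD : spotSeats y (some (D.label v)) = 0 := by
          rw [hlv]; simp [hxy]
        have sA : spotSeats y (some (A.label v)) = 0 := by simp [hxy]
        rw [sD] at eD; rw [sA] at eA
        simp only [spotSeats_none] at eD eA
        have eA' : totS y (A.S.set j (some (A.label v))) = totS y A.S := by
          unfold totS; omega
        have eD' : totS y (D.S.set i (some (D.label v))) = totS y D.S := by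
          unfold totS; omega
        rw [eD', eA', htot y]
    · have eD := sum_map_set seats D.S i none hemp (some (D.label v))
      have eA := sum_map_set seats A.S j none hj (some (A.label v))
      have sD : seats (some (D.label v)) = d := by rw [hlv]; simp [hc1]
      have sA : seats (some (A.label v)) = 1 := by simp [hc1]
      rw [sD] at eD; rw [sA] at eA
      simp only [seats_none] at eD eA
      show ssum (D.S.set i (some (D.label v))) = d * ssum (A.S.set j (some (A.label v)))
      have eA' : ssum (A.S.set j (some (A.label v))) = ssum A.S + 1 := by
        unfold ssum; omega
      have eD' : ssum (D.S.set i (some (D.label v))) = ssum D.S + d := by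
        unfold ssum; omega
      rw [eD', eA', hss]
      ring

lemma bsim_auto (d : ℕ) (hd : 1 ≤ d) {A D : Config} (h : SimRel d A D) {x : ℕ}
    {Qt : List ℕ} {i k : ℕ} (hQ : D.Q = x :: Qt) (hS : D.S[i]? = some (some (x, k))) :
    ∃ A', Relation.ReflTransGen Step A A'
      ∧ SimRel d A' { D with Q := Qt, S := D.S.set i (if k ≤ 1 then none else some (x, k - 1)) } := by
  obtain ⟨hk1, hkd⟩ := h.hbnd _ (List.mem_of_getElem? hS) _ rfl
  set nsp := (if k ≤ 1 then none else some (x, k - 1) : Option (ℕ × ℕ)) with hnsp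
  have fx : spotSeats x nsp = k - 1 := by
    rw [hnsp]; split
    · simp; omega
    · simp
  have fy : ∀ y, y ≠ x → spotSeats y nsp = 0 := by
    intro y hy
    have hxy : x ≠ y := Ne.symm hy
    rw [hnsp]; split
    · simp
    · simp [hxy]
  have fs : seats nsp = k - 1 := by
    rw [hnsp]; split
    · simp; omega
    · simp
  have eX' : totS x (D.S.set i nsp) + 1 = totS x D.S := by
    have eX := sum_map_set (spotSeats x) D.S i (some (x, k)) hS nsp
    rw [fx] at eX
    have sxk : spotSeats x (some (x, k)) = k := by simp
    rw [sxk] at eX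
    unfold totS; omega
  have eY : ∀ y, y ≠ x → totS y (D.S.set i nsp) = totS y D.S := by
    intro y hy
    have hxy : x ≠ y := Ne.symm hy
    have eX := sum_map_set (spotSeats y) D.S i (some (x, k)) hS nsp
    rw [fy y hy] at eX
    have sxk : spotSeats y (some (x, k)) = 0 := by simp [hxy]
    rw [sxk] at eX
    unfold totS; omega
  have eS' : ssum (D.S.set i nsp) + 1 = ssum D.S := by
    have eX := sum_map_set seats D.S i (some (x, k)) hS nsp
    rw [fs] at eX
    have sxk : seats (some (x, k)) = k := by simp
    rw [sxk] at eX
    unfold ssum; omega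
  have hbnd' : ∀ sp ∈ D.S.set i nsp, ∀ p, sp = some p → 1 ≤ p.2 ∧ p.2 ≤ d := by
    intro sp hsp p hp
    rcases List.mem_or_eq_of_mem_set hsp with h1 | h1
    · exact h.hbnd sp h1 p hp
    · rw [h1, hnsp] at hp
      rcases le_or_gt k 1 with hk | hk
      · rw [if_pos hk] at hp; simp at hp
      · rw [if_neg (by omega)] at hp
        injection hp with hp
        rw [← hp]
        simp
        omega
  rcases h.hq with ⟨hbQ, htot, hss⟩ | ⟨x0, r, hr1, hrd, hmid, ht0, hty, hsm⟩
  · -- boundary: start of a block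
    rw [hQ] at hbQ
    obtain ⟨Q'', hAQ, hQt⟩ := blocks_eq_cons hd hbQ.symm
    have hle : k ≤ totS x D.S := by
      have h1 := le_sum_of_get (spotSeats x) hS
      have h2 : spotSeats x (some (x, k)) = k := by simp
      rw [h2] at h1
      exact h1
    have hposA : 0 < totS x A.S := by
      rcases Nat.eq_zero_or_pos (totS x A.S) with h0 | h0
      · exfalso
        have h3 := htot x
        rw [h0, Nat.mul_zero] at h3
        omega
      · exact h0
    obtain ⟨j, k', hj⟩ := exists_spot_of_totS_pos hposA
    have hk' : k' = 1 := h.hunit _ (List.mem_of_getElem? hj) _ rfl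
    subst hk'
    refine ⟨{ A with Q := Q'', S := A.S.set j none },
      Relation.ReflTransGen.single (Or.inr ⟨x, Q'', j, 1, hAQ, hj, by simp⟩), ?_⟩
    have eAx : totS x (A.S.set j none) + 1 = totS x A.S := by
      have e := sum_map_set (spotSeats x) A.S j (some (x, 1)) hj none
      have s1 : spotSeats x (some (x, 1)) = 1 := by simp
      rw [s1] at e
      unfold totS; simp at e ⊢; omega
    have eAy : ∀ y, y ≠ x → totS y (A.S.set j none) = totS y A.S := by
      intro y hy
      have hxy : x ≠ y := Ne.symm hy
      have e := sum_map_set (spotSeats y) A.S j (some (x, 1)) hj none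
      have s1 : spotSeats y (some (x, 1)) = 0 := by simp [hxy]
      rw [s1] at e
      unfold totS; simp at e ⊢; omega
    have eAs : ssum (A.S.set j none) + 1 = ssum A.S := by
      have e := sum_map_set seats A.S j (some (x, 1)) hj none
      have s1 : seats (some (x, 1)) = 1 := by simp
      rw [s1] at e
      unfold ssum; simp at e ⊢; omega
    refine ⟨h.hV, h.hE, h.hL, h.hcap, ?_, hbnd', by simp [h.hlen], ?_⟩
    · intro sp hsp p hp
      rcases List.mem_or_eq_of_mem_set hsp with h1 | h1
      · exact h.hunit sp h1 p hp
      · rw [h1] at hp; simp at hp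
    · dsimp only
      rcases eq_or_lt_of_le hd with hd1 | hd1
      · -- d = 1
        subst hd1
        left
        refine ⟨by simpa using hQt, ?_, ?_⟩
        · intro y
          by_cases hy : y = x
          · subst hy
            have h3 := htot y
            omega
          · rw [eY y hy, eAy y hy]
            exact htot y
        · have h3 := hss
          omega
      · -- d ≥ 2
        right
        refine ⟨x, d - 1, by omega, by omega, hQt, ?_, ?_, ?_⟩
        · have e1 : totS x A.S = totS x (A.S.set j none) + 1 := by omega
          have h3 := htot x
          rw [e1] at h3
          have e2 : d * (totS x (A.S.set j none) + 1) = d * totS x (A.S.set j none) + d := by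
            ring
          omega
        · intro y hy
          rw [eY y hy, eAy y hy]
          exact htot y
        · have e1 : ssum A.S = ssum (A.S.set j none) + 1 := by omega
          have h3 := hss
          rw [e1] at h3
          have e2 : d * (ssum (A.S.set j none) + 1) = d * ssum (A.S.set j none) + d := by
            ring
          omega
  · -- mid-block
    obtain ⟨r', rfl⟩ : ∃ r', r = r' + 1 := ⟨r - 1, by omega⟩
    rw [List.replicate_succ] at hmid
    rw [hQ] at hmid
    injection hmid with e1 e2
    subst e1
    refine ⟨A, Relation.ReflTransGen.refl, ?_⟩
    refine ⟨h.hV, h.hE, h.hL, h.hcap, h.hunit, hbnd', by simp [h.hlen], ?_⟩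
    dsimp only
    rcases Nat.eq_zero_or_pos r' with hr0 | hr0
    · subst hr0
      left
      refine ⟨by simpa using e2, ?_, ?_⟩
      · intro y
        by_cases hy : y = x
        · subst hy; have := ht0; omega
        · rw [eY y hy]; exact hty y hy
      · omega
    · right
      refine ⟨x, r', hr0, by omega, e2, by omega, ?_, by omega⟩
      intro y hy
      rw [eY y hy]; exact hty y hy

lemma bsim (d : ℕ) (hd : 1 ≤ d) {A D D' : Config} (h : SimRel d A D) (hs : Step D D') :
    ∃ A', Relation.ReflTransGen Step A A' ∧ SimRel d A' D' := by
  rcases hs with ⟨hna, v, i, hfree, hemp, rfl⟩ | ⟨x, Qt, i, k, hQ, hS, rfl⟩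
  · exact bsim_player d hd h hna hfree hemp
  · exact bsim_auto d hd h hQ hS

lemma bmany (d : ℕ) (hd : 1 ≤ d) {A D E : Config} (h : SimRel d A D)
    (hs : Relation.ReflTransGen Step D E) :
    ∃ A', Relation.ReflTransGen Step A A' ∧ SimRel d A' E := by
  induction hs with
  | refl => exact ⟨A, Relation.ReflTransGen.refl, h⟩
  | tail hDE hstep ih =>
    obtain ⟨A1, h1, h2⟩ := ih
    obtain ⟨A2, h3, h4⟩ := bsim d hd h2 hstep
    exact ⟨A2, h1.trans h3, h4⟩

lemma initSimRel (d : ℕ) (hd : 1 ≤ d) (C : Config)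
    (hcap : ∀ v ∈ C.V, (C.label v).2 = 1)
    (hspot : ∀ sp ∈ C.S, ∀ x k, sp = some (x, k) → k = 1) :
    SimRel d C (scaleC d C) := by
  refine ⟨rfl, rfl, rfl, hcap, ?_, ?_, by simp [scaleC], Or.inl ⟨rfl, ?_, ?_⟩⟩
  · intro sp hsp p hp
    exact hspot sp hsp p.1 p.2 (by rw [hp])
  · intro sp hsp p hp
    have hsp' : sp ∈ C.S.map (Option.map fun p => (p.1, d * p.2)) := hsp
    rw [List.mem_map] at hsp'
    obtain ⟨sp0, h0, rfl⟩ := hsp'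
    rcases sp0 with _ | q
    · simp at hp
    · simp only [Option.map_some, Option.some.injEq] at hp
      have hq1 : q.2 = 1 := hspot _ h0 q.1 q.2 rfl
      rw [← hp]
      simp [hq1]
      omega
  · intro y
    exact totS_scale d y C.S
  · exact ssum_scale d C.S

theorem scale_solvable' (d : ℕ) (hd : 1 ≤ d) (C : Config)
    (hcap : ∀ v ∈ C.V, (C.label v).2 = 1)
    (hspot : ∀ sp ∈ C.S, ∀ x k, sp = some (x, k) → k = 1) :
    Solvable C ↔ Solvable (scaleC d C) := by
  constructor
  · rintro ⟨E, hE, h1, h2, h3⟩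
    have hunit : ∀ sp ∈ C.S, ∀ p, sp = some p → p.2 = 1 := fun sp hsp p hp =>
      hspot sp hsp p.1 p.2 (by rw [hp])
    refine ⟨scaleC d E, (fmany d hd hcap hunit hE).2, ?_, ?_, ?_⟩
    · show E.V = ∅; exact h1
    · show blocks d E.Q = []
      rw [h2]; rfl
    · intro sp hsp
      have hsp' : sp ∈ E.S.map (Option.map fun p => (p.1, d * p.2)) := hsp
      rw [List.mem_map] at hsp'
      obtain ⟨sp0, h0, rfl⟩ := hsp'
      rw [h3 sp0 h0]
      rfl
  · rintro ⟨E, hE, h1, h2, h3⟩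
    obtain ⟨A', hCA, hrel⟩ := bmany d hd (initSimRel d hd C hcap hspot) hE
    refine ⟨A', hCA, ?_, ?_, ?_⟩
    · rw [← hrel.hV]; exact h1
    · rcases hrel.hq with ⟨hb, _, _⟩ | ⟨x, r, hr1, _, hm, _, _, _⟩
      · rw [h2] at hb
        rcases hA : A'.Q with _ | ⟨y, T⟩
        · rfl
        · exfalso
          rw [hA, blocks_cons' d y T hd] at hb
          simp at hb
      · exfalso
        rw [h2] at hm
        have := congrArg List.length hm
        simp at this
        omega
    · have hz : ssum E.S = 0 := by
        apply List.sum_eq_zero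
        intro a ha
        rw [List.mem_map] at ha
        obtain ⟨sp, hsp, rfl⟩ := ha
        rw [h3 sp hsp]
        rfl
      have hA0 : ssum A'.S = 0 := by
        rcases hrel.hq with ⟨_, _, hs⟩ | ⟨x, r, hr1, _, _, _, _, hs⟩
        · rw [hz] at hs
          rcases Nat.mul_eq_zero.mp hs.symm with h | h
          · omega
          · exact h
        · omega
      intro sp hsp
      have h4 := List.sum_eq_zero_iff.mp hA0 (seats sp) (List.mem_map_of_mem hsp)
      rcases sp with _ | p
      · rfl
      · exfalso
        have := hrel.hunit _ hsp p rfl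
        simp at h4
        omega

/-- Capacity-scaling preserves solvability for capacity-1 configurations. -/
theorem scale_solvable (d : ℕ) (hd : 1 ≤ d) (C : Config)
    (hcap : ∀ v ∈ C.V, (C.label v).2 = 1)
    (hspot : ∀ sp ∈ C.S, ∀ x k, sp = some (x, k) → k = 1) :
    Solvable C ↔ Solvable (scaleC d C) := scale_solvable' d hd C hcap hspot
end

section
/- With at least as many parking spots as colors, congestion-free instances are always solvable: if the congestion graph G has no edges (every bus is free), the configuration is eligible, and the number of parking spots s is at least the number of distinct colors c appearing in the instance, then (G, Q, ε^s) is solvable. -/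
private lemma decomp {α : Type*} : ∀ (l : List α) (i : ℕ) (a : α), l[i]? = some a →
    ∃ t d, l = t ++ a :: d ∧ t.length = i ∧ ∀ b, l.set i b = t ++ b :: d := by
  intro l
  induction l with
  | nil => intro i a h; simp at h
  | cons c l ih =>
    intro i a h
    cases i with
    | zero =>
      refine ⟨[], l, ?_, rfl, fun b => rfl⟩
      simp at h; simp [h]
    | succ i =>
      simp only [List.getElem?_cons_succ] at h
      obtain ⟨t, d, h1, h2, h3⟩ := ih i a h
      exact ⟨c :: t, d, by simp [h1], by simp [h2], fun b => by simp [h3 b]⟩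

private lemma set_at_length {α : Type*} : ∀ (t : List α) (d : List α) (c b : α),
    (t ++ c :: d).set t.length b = t ++ b :: d := by
  intro t
  induction t with
  | nil => intro d c b; rfl
  | cons a t ih => intro d c b; simp [ih]

private lemma get_at_length {α : Type*} : ∀ (t : List α) (d : List α) (c : α),
    (t ++ c :: d)[t.length]? = some c := by
  intro t
  induction t with
  | nil => intro d c; rfl
  | cons a t ih => intro d c; simpa using ih d c

private lemma exists_none_spot : ∀ (l : List (Option (ℕ × ℕ))),
    (l.filterMap id).length < l.length → ∃ i : ℕ, l[i]? = some none := by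
  intro l
  induction l with
  | nil => simp
  | cons c l ih =>
    intro h
    cases c with
    | none => exact ⟨0, rfl⟩
    | some a =>
      rw [show List.filterMap id (some a :: l) = a :: List.filterMap id l from by simp] at h
      simp only [List.length_cons] at h
      obtain ⟨i, hi⟩ := ih (by omega)
      exact ⟨i + 1, by simpa using hi⟩

private lemma empty_solvable (C : Config)
    (hWV : ∀ v ∈ C.V, 1 ≤ (C.label v).2)
    (hWS : ∀ sp ∈ C.S, ∀ y k, sp = some (y, k) → 1 ≤ k)
    (hE : ∀ y, C.Q.count y = C.capOf y)
    (hQ : C.Q = []) : Solvable C := by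
  refine ⟨C, Relation.ReflTransGen.refl, ?_, hQ, ?_⟩
  · rw [Finset.eq_empty_iff_forall_notMem]
    intro v hv
    have h1 := hE (C.label v).1
    rw [hQ] at h1
    simp only [List.count_nil] at h1
    have hvm : v ∈ C.V.filter (fun u => (C.label u).1 = (C.label v).1) :=
      Finset.mem_filter.mpr ⟨hv, rfl⟩
    have h2 : (C.label v).2 ≤ (C.V.filter (fun u => (C.label u).1 = (C.label v).1)).sum
        (fun u => (C.label u).2) :=
      Finset.single_le_sum (f := fun u => (C.label u).2) (fun u _ => Nat.zero_le _) hvm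
    have h3 := hWV v hv
    unfold Config.capOf at h1
    omega
  · intro sp hsp
    match sp with
    | none => rfl
    | some (y, k) =>
      exfalso
      have hk := hWS _ hsp y k rfl
      have h1 := hE y
      rw [hQ] at h1
      simp only [List.count_nil] at h1
      have h2 : spotSeats y (some (y, k)) ≤ (C.S.map (spotSeats y)).sum :=
        List.single_le_sum (fun b _ => Nat.zero_le _) _ (List.mem_map_of_mem hsp)
      have he : spotSeats y (some (y, k)) = k := by simp [spotSeats]
      rw [he] at h2
      unfold Config.capOf at h1
      omega

private lemma solve_aux : ∀ (n : ℕ) (C : Config),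
    C.Q.length ≤ n →
    (∀ v ∈ C.V, 1 ≤ (C.label v).2) →
    (∀ sp ∈ C.S, ∀ y k, sp = some (y, k) → 1 ≤ k) →
    (∀ u ∈ C.V, ∀ w ∈ C.V, ¬ C.edge u w) →
    (∀ y, C.Q.count y = C.capOf y) →
    ((C.S.filterMap id).map Prod.fst).Nodup →
    C.Q.toFinset.card ≤ C.S.length →
    Solvable C := by
  intro n
  induction n with
  | zero =>
    intro C hlen hWV hWS hedge hE hnd hcard
    exact empty_solvable C hWV hWS hE (List.length_eq_zero_iff.mp (Nat.le_zero.mp hlen))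
  | succ n ih =>
    intro C hlen hWV hWS hedge hE hnd hcard
    cases hQ : C.Q with
    | nil => exact empty_solvable C hWV hWS hE hQ
    | cons x Q' =>
      have hlen' : Q'.length ≤ n := by rw [hQ] at hlen; simp at hlen; omega
      by_cases hA : ∃ (i : ℕ) (k : ℕ), C.S[i]? = some (some (x, k))
      · -- auto step applies
        obtain ⟨i, k, hi⟩ := hA
        obtain ⟨t, d, hSd, htl, hset⟩ := decomp C.S i (some (x, k)) hi
        have hk1 : 1 ≤ k := hWS _ (List.mem_of_getElem? hi) x k rfl
        set b : Option (ℕ × ℕ) := if k ≤ 1 then none else some (x, k - 1) with hb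
        set C' : Config := { C with Q := Q', S := C.S.set i b } with hC'
        have hS' : C'.S = t ++ b :: d := hset b
        have hstep : Step C C' := Or.inr ⟨x, Q', i, k, hQ, hi, rfl⟩
        have hsolv : Solvable C' := by
          apply ih
          · exact hlen'
          · exact hWV
          · -- WS
            intro sp hsp y k' hspk
            have hsp' : sp ∈ t ∨ sp = b ∨ sp ∈ d := by
              have h := hsp
              rw [hS'] at h
              simpa using h
            rcases hsp' with h | h | h
            · exact hWS sp (by rw [hSd]; simp [h]) y k' hspk
            · subst h
              rw [hb] at hspk
              by_cases hk : k ≤ 1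
              · simp [hk] at hspk
              · simp [hk] at hspk; omega
            · exact hWS sp (by rw [hSd]; simp [h]) y k' hspk
          · exact hedge
          · -- counts
            intro y
            have hEy := hE y
            rw [hQ] at hEy
            unfold Config.capOf at hEy ⊢
            rw [hSd] at hEy
            rw [show C'.Q = Q' from rfl, show C'.V = C.V from rfl,
              show C'.label = C.label from rfl, hS']
            simp only [List.map_append, List.map_cons, List.sum_append, List.sum_cons,
              List.count_cons] at hEy ⊢
            have hsb : spotSeats y b = if x = y then k - 1 else 0 := by
              rw [hb]
              by_cases hk : k ≤ 1
              · simp only [hk, if_true, spotSeats]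
                split <;> omega
              · simp only [hk, if_false, spotSeats]
            rw [hsb]
            rw [show spotSeats y (some (x, k)) = if x = y then k else 0 from rfl] at hEy
            by_cases hxy : x = y
            · subst hxy
              simp at hEy ⊢
              omega
            · simp [hxy, Ne.symm hxy] at hEy ⊢
              omega
          · -- nodup
            have hnd' := hnd
            rw [hSd] at hnd'
            rw [show List.filterMap id (t ++ some (x, k) :: d)
                = t.filterMap id ++ (x, k) :: d.filterMap id from by simp] at hnd'
            rw [List.map_append, List.map_cons] at hnd'
            rw [hS', hb]
            by_cases hk : k ≤ 1
            · simp only [hk, if_true]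
              rw [show List.filterMap id (t ++ (none : Option (ℕ × ℕ)) :: d)
                  = t.filterMap id ++ d.filterMap id from by simp]
              rw [List.map_append]
              exact (List.nodup_middle.mp hnd').of_cons
            · simp only [hk, if_false]
              rw [show List.filterMap id (t ++ (some (x, k - 1)) :: d)
                  = t.filterMap id ++ (x, k - 1) :: d.filterMap id from by simp]
              rw [List.map_append, List.map_cons]
              exact hnd'
          · -- card
            rw [show C'.Q = Q' from rfl, show C'.S = C.S.set i b from rfl, List.length_set]
            have hsub : Q'.toFinset ⊆ C.Q.toFinset := by
              rw [hQ, List.toFinset_cons]; exact Finset.subset_insert _ _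
            exact le_trans (Finset.card_le_card hsub) hcard
        obtain ⟨E, hre, hemp⟩ := hsolv
        exact ⟨E, Relation.ReflTransGen.head hstep hre, hemp⟩
      · -- player step then auto step
        push_neg at hA
        have hnos : ∀ k, some (x, k) ∉ C.S := by
          intro k hk
          obtain ⟨i, hi⟩ := List.getElem?_of_mem hk
          exact hA i k hi
        have hnoauto : ¬ AutoApplicable C := by
          rintro ⟨C'', x', Q'', i, k, hQx, hi, -⟩
          rw [hQ] at hQx
          injection hQx with h1 h2
          subst h1
          exact hA i k hi
        have hsz : (C.S.map (spotSeats x)).sum = 0 := by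
          apply List.sum_eq_zero
          intro a ha
          obtain ⟨sp, hsp, rfl⟩ := List.mem_map.mp ha
          match sp with
          | none => rfl
          | some (y, k) =>
            by_cases hxy : y = x
            · subst hxy; exact absurd hsp (hnos k)
            · simp [spotSeats, hxy]
        have hcx : 1 ≤ C.capOf x := by
          have h := hE x
          rw [hQ] at h
          simp [List.count_cons] at h
          omega
        have hbus : ∃ v ∈ C.V.filter (fun v => (C.label v).1 = x), (C.label v).2 ≠ 0 := by
          apply Finset.exists_ne_zero_of_sum_ne_zero
          unfold Config.capOf at hcx
          omega
        obtain ⟨v, hvf, -⟩ := hbus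
        have hv : v ∈ C.V := (Finset.mem_filter.mp hvf).1
        have hvx : (C.label v).1 = x := (Finset.mem_filter.mp hvf).2
        -- find an empty spot
        have hocc : ((C.S.filterMap id).length) < C.S.length := by
          set L := (C.S.filterMap id).map Prod.fst with hL
          have hsub : L.toFinset ⊆ C.Q.toFinset.erase x := by
            intro y hy
            rw [List.mem_toFinset, hL, List.mem_map] at hy
            obtain ⟨⟨y', k'⟩, hmem, hfst⟩ := hy
            obtain ⟨sp, hsp, hid⟩ := List.mem_filterMap.mp hmem
            simp only [id] at hid
            subst hid
            have hyy : y' = y := hfst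
            have hk' : 1 ≤ k' := hWS _ hsp y' k' rfl
            have hseat : k' ≤ (C.S.map (spotSeats y')).sum := by
              have h := List.single_le_sum (l := C.S.map (spotSeats y'))
                (fun b _ => Nat.zero_le b) (spotSeats y' (some (y', k')))
                (List.mem_map_of_mem hsp)
              simpa [spotSeats] using h
            have hcy : 1 ≤ C.Q.count y' := by
              have h := hE y'
              unfold Config.capOf at h
              omega
            have hyQ : y' ∈ C.Q.toFinset := by
              rw [List.mem_toFinset]
              exact List.count_pos_iff.mp (by omega)
            have hyx : y' ≠ x := fun h => hnos k' (h ▸ hsp)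
            exact hyy ▸ Finset.mem_erase.mpr ⟨hyx, hyQ⟩
          have hxQ : x ∈ C.Q.toFinset := by rw [hQ]; simp
          have h1 : L.toFinset.card ≤ (C.Q.toFinset.erase x).card := Finset.card_le_card hsub
          have h2 : (C.Q.toFinset.erase x).card = C.Q.toFinset.card - 1 :=
            Finset.card_erase_of_mem hxQ
          have h3 : L.toFinset.card = L.length := List.toFinset_card_of_nodup hnd
          have h4 : 1 ≤ C.Q.toFinset.card := Finset.card_pos.mpr ⟨x, hxQ⟩
          have h5 : L.length = (C.S.filterMap id).length := by rw [hL, List.length_map]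
          omega
        obtain ⟨j, hj⟩ := exists_none_spot C.S hocc
        obtain ⟨t, d, hSd, htl, hset⟩ := decomp C.S j none hj
        set k := (C.label v).2 with hkdef
        have hk1 : 1 ≤ k := hWV v hv
        have hlp : C.label v = (x, k) := by rw [hkdef, ← hvx]
        set C₁ : Config := { C with V := C.V.erase v, S := C.S.set j (some (C.label v)) } with hC₁
        have hstep1 : Step C C₁ :=
          Or.inl ⟨hnoauto, v, j, ⟨hv, fun w hw => hedge v hv w hw⟩, hj, rfl⟩
        have hS1 : C₁.S = t ++ some (x, k) :: d := by
          show C.S.set j (some (C.label v)) = _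
          rw [hlp, hset]
        have hj1 : C₁.S[j]? = some (some (x, k)) := by
          rw [hS1, ← htl]; exact get_at_length t d _
        set b : Option (ℕ × ℕ) := if k ≤ 1 then none else some (x, k - 1) with hb
        set C₂ : Config := { C₁ with Q := Q', S := C₁.S.set j b } with hC₂
        have hstep2 : Step C₁ C₂ := Or.inr ⟨x, Q', j, k, hQ, hj1, rfl⟩
        have hS2 : C₂.S = t ++ b :: d := by
          show C₁.S.set j b = _
          rw [hS1, ← htl, set_at_length]
        have hsolv : Solvable C₂ := by
          apply ih
          · exact hlen'
          · intro u hu; exact hWV u (Finset.mem_of_mem_erase hu)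
          · -- WS
            intro sp hsp y k' hspk
            have hsp' : sp ∈ t ∨ sp = b ∨ sp ∈ d := by
              have h := hsp
              rw [hS2] at h
              simpa using h
            rcases hsp' with h | h | h
            · exact hWS sp (by rw [hSd]; simp [h]) y k' hspk
            · subst h
              rw [hb] at hspk
              by_cases hk : k ≤ 1
              · simp [hk] at hspk
              · simp [hk] at hspk; omega
            · exact hWS sp (by rw [hSd]; simp [h]) y k' hspk
          · intro u hu w hw; exact hedge u (Finset.mem_of_mem_erase hu) w (Finset.mem_of_mem_erase hw)
          · -- counts
            intro y
            have hEy := hE y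
            rw [hQ] at hEy
            unfold Config.capOf at hEy ⊢
            rw [hSd] at hEy
            rw [show C₂.Q = Q' from rfl, show C₂.V = C.V.erase v from rfl,
              show C₂.label = C.label from rfl, hS2]
            rw [Finset.filter_erase]
            simp only [List.map_append, List.map_cons, List.sum_append, List.sum_cons,
              List.count_cons] at hEy ⊢
            have hsb : spotSeats y b = if x = y then k - 1 else 0 := by
              rw [hb]
              by_cases hk : k ≤ 1
              · simp only [hk, if_true, spotSeats]
                split <;> omega
              · simp only [hk, if_false, spotSeats]
            rw [hsb]
            rw [show spotSeats y (none : Option (ℕ × ℕ)) = 0 from rfl] at hEy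
            by_cases hxy : x = y
            · subst hxy
              have hvm : v ∈ C.V.filter (fun u => (C.label u).1 = x) := hvf
              have hsum : (C.label v).2
                  + ∑ u ∈ (C.V.filter (fun u => (C.label u).1 = x)).erase v, (C.label u).2
                  = ∑ u ∈ C.V.filter (fun u => (C.label u).1 = x), (C.label u).2 :=
                Finset.add_sum_erase _ (fun u => (C.label u).2) hvm
              simp at hEy ⊢
              omega
            · have hvnm : v ∉ C.V.filter (fun u => (C.label u).1 = y) := by
                simp only [Finset.mem_filter, hvx, not_and]
                exact fun _ => hxy
              rw [Finset.erase_eq_of_notMem hvnm]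
              simp [hxy, Ne.symm hxy] at hEy ⊢
              omega
          · -- nodup
            have hnd' := hnd
            rw [hSd] at hnd'
            rw [show List.filterMap id (t ++ (none : Option (ℕ × ℕ)) :: d)
                = t.filterMap id ++ d.filterMap id from by simp] at hnd'
            rw [List.map_append] at hnd'
            have hxnot : x ∉ (t.filterMap id).map Prod.fst ++ (d.filterMap id).map Prod.fst := by
              intro hx
              rw [List.mem_append] at hx
              rcases hx with hx | hx <;>
              · obtain ⟨⟨y', k'⟩, hmem, hfst⟩ := List.mem_map.mp hx
                obtain ⟨sp, hsp, hid⟩ := List.mem_filterMap.mp hmem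
                simp only [id] at hid
                subst hid
                have hyy : y' = x := hfst
                rw [hyy] at hsp
                exact hnos k' (by rw [hSd]; simp [hsp])
            rw [hS2, hb]
            by_cases hk : k ≤ 1
            · simp only [hk, if_true]
              rw [show List.filterMap id (t ++ (none : Option (ℕ × ℕ)) :: d)
                  = t.filterMap id ++ d.filterMap id from by simp]
              rw [List.map_append]
              exact hnd'
            · simp only [hk, if_false]
              rw [show List.filterMap id (t ++ (some (x, k - 1)) :: d)
                  = t.filterMap id ++ (x, k - 1) :: d.filterMap id from by simp]
              rw [List.map_append, List.map_cons]
              exact List.nodup_middle.mpr (List.nodup_cons.mpr ⟨hxnot, hnd'⟩)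
          · -- card
            rw [show C₂.Q = Q' from rfl, hS2]
            have hlen2 : (t ++ b :: d).length = C.S.length := by rw [hSd]; simp
            rw [hlen2]
            have hsub : Q'.toFinset ⊆ C.Q.toFinset := by
              rw [hQ, List.toFinset_cons]; exact Finset.subset_insert _ _
            exact le_trans (Finset.card_le_card hsub) hcard
        obtain ⟨E, hre, hemp⟩ := hsolv
        exact ⟨E, Relation.ReflTransGen.head hstep1 (Relation.ReflTransGen.head hstep2 hre), hemp⟩

/-- With at least as many parking spots as colors, eligible congestion-free
instances (with all spots initially empty) are always solvable. -/
theorem edgeless_enough_spots_solvable (C : Config)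
    (hWF : C.WF)
    (hedge : ∀ u ∈ C.V, ∀ w ∈ C.V, ¬ C.edge u w)
    (hE : ∀ x, C.Q.count x = C.capOf x)
    (hS : ∀ sp ∈ C.S, sp = none)
    (hcard : (colorSet C).card ≤ C.S.length) :
    Solvable C := by
  obtain ⟨hWV, hWS⟩ := hWF
  apply solve_aux C.Q.length C le_rfl hWV hWS hedge hE
  · have h : C.S.filterMap id = [] :=
      List.filterMap_eq_nil_iff.mpr (by intro a ha; rw [hS a ha]; rfl)
    rw [h]
    simp
  · refine le_trans (Finset.card_le_card ?_) hcard
    intro y hy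
    unfold colorSet
    exact Finset.mem_union_left _ (Finset.mem_union_right _ hy)
end

section
/- Forward direction of the congestion-free reduction with s spots and s+1 colors: let M = {a₁,…,a_{3n}} be positive integers with sum nT that admits a partition into n triples each summing to T. Then the following configuration with s empty spots and colors x₀,…,x_s is solvable: the (edgeless) congestion graph consists of one x₀-colored bus of capacity a_i for each i ∈ {1,…,3n}, n buses of color x_j with capacity 2 for each j ∈ {1,…,s−1}, and n buses of color x_s with capacity 1; the passenger queue is (x₁x₂⋯x_{s−1} x₀^T x_s x₁x₂⋯x_{s−1})^n. -/
/-- A 3-partition of `a 0, …, a (3n-1)` into `n` triples each summing to `T`. -/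
def HasPartition (n T : ℕ) (a : ℕ → ℕ) : Prop :=
  ∃ f : ℕ → ℕ, (∀ i < 3 * n, f i < n) ∧
    ∀ g < n, ((Finset.range (3 * n)).filter (fun i => f i = g)).card = 3 ∧
      ((Finset.range (3 * n)).filter (fun i => f i = g)).sum a = T

/-- The congestion-free configuration reduced from a 3-Partition instance:
`s` empty spots, colors `0, …, s` (`x_j` is `j`); an edgeless graph with one
bus of color `0` and capacity `a i` for each `i < 3n` (vertex `Nat.pair 0 i`),
`n` buses of color `j` with capacity `2` for each `1 ≤ j ≤ s - 1`, and `n`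
buses of color `s` with capacity `1` (vertices `Nat.pair j m`, `m < n`);
queue `(x₁⋯x_{s-1} x₀^T x_s x₁⋯x_{s-1})^n`. -/
def Bconf (n T s : ℕ) (a : ℕ → ℕ) : Config where
  V := ((Finset.range (3 * n)).image fun i => Nat.pair 0 i) ∪
       ((Finset.Icc 1 s).biUnion fun j =>
          (Finset.range n).image fun m => Nat.pair j m)
  edge := fun _ _ => false
  label := fun v =>
    if v.unpair.1 = 0 then (0, a v.unpair.2)
    else if v.unpair.1 = s then (s, 1)
    else (v.unpair.1, 2)
  Q := (List.replicate n
         (List.range' 1 (s - 1) ++ List.replicate T 0 ++ [s]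
           ++ List.range' 1 (s - 1))).flatten
  S := List.replicate s none

namespace BO

lemma get?_append_cons {α} (A : List α) (x : α) (B : List α) :
    (A ++ x :: B)[A.length]? = some x := by
  induction A with
  | nil => rfl
  | cons a A ih => simpa using ih

lemma set_append_cons {α} (A : List α) (x y : α) (B : List α) :
    (A ++ x :: B).set A.length y = A ++ y :: B := by
  induction A with
  | nil => rfl
  | cons a A ih => simp [ih]

lemma get?_append_cons' {α} (A : List α) (x : α) (B : List α) (i : ℕ)
    (hi : i = A.length) : (A ++ x :: B)[i]? = some x := by
  subst hi; exact get?_append_cons A x B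

lemma set_append_cons' {α} (A : List α) (x y : α) (B : List α) (i : ℕ)
    (hi : i = A.length) : (A ++ x :: B).set i y = A ++ y :: B := by
  subst hi; exact set_append_cons A x y B

def L (s : ℕ) (a : ℕ → ℕ) : ℕ → ℕ × ℕ := fun v =>
  if v.unpair.1 = 0 then (0, a v.unpair.2)
  else if v.unpair.1 = s then (s, 1)
  else (v.unpair.1, 2)

def mk (s : ℕ) (a : ℕ → ℕ) (V : Finset ℕ) (Q : List ℕ)
    (S : List (Option (ℕ × ℕ))) : Config :=
  ⟨V, fun _ _ => false, L s a, Q, S⟩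

abbrev Reach := Relation.ReflTransGen Step

lemma notAuto {s a V x Q S} (h : ∀ sp ∈ S, ∀ k, sp ≠ some (x, k)) :
    ¬ AutoApplicable (mk s a V (x :: Q) S) := by
  rintro ⟨C', y, Q', i, k, hq, hi, -⟩
  obtain ⟨rfl, rfl⟩ : y = x ∧ Q' = Q := by
    constructor <;> · cases hq; rfl
  exact h _ (List.mem_of_getElem? hi) k rfl

lemma step_auto {s a V Q S} (x Q' i k) (hQ : Q = x :: Q')
    (hi : S[(i : ℕ)]? = some (some (x, k))) :
    Step (mk s a V Q S)
      (mk s a V Q' (S.set i (if k ≤ 1 then none else some (x, k - 1)))) := by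
  refine Or.inr ⟨x, Q', i, k, hQ, hi, rfl⟩

lemma step_player {s a V Q S} (v i) (hna : ¬ AutoApplicable (mk s a V Q S))
    (hv : v ∈ V) (hi : S[(i : ℕ)]? = some none) :
    Step (mk s a V Q S)
      (mk s a (V.erase v) Q (S.set i (some (L s a v)))) := by
  exact Or.inl ⟨hna, v, i, ⟨hv, fun _ _ => by simp [mk]⟩, hi, rfl⟩

def Pfx (t : ℕ) : List (Option (ℕ × ℕ)) :=
  (List.range' 1 t).map fun y => some (y, 1)

@[simp] lemma Pfx_length (t : ℕ) : (Pfx t).length = t := by simp [Pfx]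

lemma Pfx_succ (t : ℕ) : Pfx (t + 1) = Pfx t ++ [some (t + 1, 1)] := by
  simp [Pfx, List.range'_concat, Nat.add_comm]

lemma Pfx_no (t x : ℕ) (hx : t < x) : ∀ sp ∈ Pfx t, ∀ k, sp ≠ some (x, k) := by
  intro sp hsp k he
  simp only [Pfx, List.mem_map, List.mem_range'_1] at hsp
  obtain ⟨y, ⟨h1, h2⟩, rfl⟩ := hsp
  cases he; omega

lemma Pfx_no0 (t : ℕ) : ∀ sp ∈ Pfx t, ∀ k, sp ≠ some (0, k) := by
  intro sp hsp k he
  simp only [Pfx, List.mem_map, List.mem_range'_1] at hsp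
  obtain ⟨y, ⟨h1, h2⟩, rfl⟩ := hsp
  cases he; omega

end BO
namespace BO

lemma fill (s : ℕ) (a : ℕ → ℕ) (rest : List ℕ) :
    ∀ (m t : ℕ) (V : Finset ℕ) (b : ℕ → ℕ),
    (∀ c, t + 1 ≤ c → c < t + 1 + m → b c ∈ V ∧ L s a (b c) = (c, 2)) →
    (∀ c c', t + 1 ≤ c → c < t + 1 + m → t + 1 ≤ c' → c' < t + 1 + m →
       b c = b c' → c = c') →
    Reach
      (mk s a V (List.range' (t + 1) m ++ rest)
        (Pfx t ++ List.replicate (m + 1) none))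
      (mk s a (V \ ((Finset.Ico (t + 1) (t + 1 + m)).image b)) rest
        (Pfx (t + m) ++ [none])) := by
  intro m
  induction m with
  | zero =>
    intro t V b _ _
    have : V \ ((Finset.Ico (t + 1) (t + 1 + 0)).image b) = V := by simp
    rw [this]
    exact Relation.ReflTransGen.refl
  | succ m ih =>
    intro t V b hb hinj
    have hbl := (hb (t + 1) le_rfl (by omega)).2
    have hbV := (hb (t + 1) le_rfl (by omega)).1
    -- queue head
    have hq : List.range' (t + 1) (m + 1) ++ rest
        = (t + 1) :: (List.range' (t + 2) m ++ rest) := by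
      rw [List.range'_succ (s := t+1) (n := m) (step := 1), List.cons_append]
    -- spots
    have hS : Pfx t ++ List.replicate (m + 1 + 1) none
        = Pfx t ++ (none : Option (ℕ × ℕ)) :: List.replicate (m + 1) none := by
      simp [List.replicate_succ]
    have hna : ¬ AutoApplicable (mk s a V ((t+1) :: (List.range' (t+2) m ++ rest))
        (Pfx t ++ (none : Option (ℕ × ℕ)) :: List.replicate (m + 1) none)) := by
      refine notAuto ?_
      intro sp hsp k he
      rcases List.mem_append.1 hsp with h | h
      · exact Pfx_no t (t+1) (by omega) sp h k he
      · rcases List.mem_cons.1 h with rfl | h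
        · simp at he
        · simp [List.eq_of_mem_replicate h] at he
    have st1 : Step
        (mk s a V ((t+1) :: (List.range' (t+2) m ++ rest))
          (Pfx t ++ (none : Option (ℕ × ℕ)) :: List.replicate (m + 1) none))
        (mk s a (V.erase (b (t+1))) ((t+1) :: (List.range' (t+2) m ++ rest))
          (Pfx t ++ some (t+1, 2) :: List.replicate (m + 1) none)) := by
      have := step_player (b (t+1)) (Pfx t).length hna hbV (get?_append_cons _ _ _)
      rwa [set_append_cons, hbl] at this
    have st2 : Step
        (mk s a (V.erase (b (t+1))) ((t+1) :: (List.range' (t+2) m ++ rest))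
          (Pfx t ++ some (t+1, 2) :: List.replicate (m + 1) none))
        (mk s a (V.erase (b (t+1))) (List.range' (t+2) m ++ rest)
          (Pfx (t+1) ++ List.replicate (m + 1) none)) := by
      have := step_auto (s:=s) (a:=a) (V:=V.erase (b (t+1)))
        (S := Pfx t ++ some (t+1, 2) :: List.replicate (m + 1) none)
        (t+1) (List.range' (t + 2) m ++ rest) (Pfx t).length 2
        rfl (get?_append_cons (Pfx t) _ (List.replicate (m + 1) none))
      rw [set_append_cons] at this
      have h2 : (if 2 ≤ 1 then (none : Option (ℕ × ℕ)) else some (t + 1, 2 - 1)) = some (t+1, 1) := by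
        norm_num
      rw [h2] at this
      have hS2 : Pfx t ++ (some (t+1,1)) :: List.replicate (m + 1) none
          = Pfx (t+1) ++ List.replicate (m + 1) none := by
        rw [Pfx_succ]; simp
      rwa [hS2] at this
    have hmain := ih (t+1) (V.erase (b (t+1))) b
      (fun c hc1 hc2 => ⟨Finset.mem_erase.2 ⟨fun he =>
          by have := hinj c (t+1) (by omega) (by omega) (by omega) (by omega) he; omega,
        (hb c (by omega) (by omega)).1⟩, (hb c (by omega) (by omega)).2⟩)
      (fun c c' h1 h2 h3 h4 he => hinj c c' (by omega) (by omega) (by omega) (by omega) he)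
    have hVeq : V.erase (b (t+1)) \ ((Finset.Ico (t + 2) (t + 2 + m)).image b)
        = V \ ((Finset.Ico (t + 1) (t + 1 + (m+1))).image b) := by
      have : Finset.Ico (t + 1) (t + 1 + (m+1)) = insert (t+1) (Finset.Ico (t + 2) (t + 2 + m)) := by
        ext v; simp only [Finset.mem_Ico, Finset.mem_insert]; omega
      rw [this, Finset.image_insert]
      ext v
      simp only [Finset.mem_sdiff, Finset.mem_erase, Finset.mem_insert]
      tauto
    have ht : t + 1 + m = t + (m + 1) := by omega
    rw [ht, hVeq] at hmain
    rw [hq, hS]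
    exact Relation.ReflTransGen.head st1 (Relation.ReflTransGen.head st2 hmain)

end BO
namespace BO

lemma consume (s : ℕ) (a : ℕ → ℕ) (V : Finset ℕ) (rest : List ℕ)
    (A B : List (Option (ℕ × ℕ))) :
    ∀ k m, 1 ≤ k → k ≤ m →
    Reach (mk s a V (List.replicate m 0 ++ rest) (A ++ some (0, k) :: B))
          (mk s a V (List.replicate (m - k) 0 ++ rest) (A ++ none :: B)) := by
  intro k
  induction k with
  | zero => omega
  | succ k ih =>
    intro m _ hkm
    obtain ⟨m', rfl⟩ : ∃ m', m = m' + 1 := ⟨m - 1, by omega⟩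
    have hq : List.replicate (m' + 1) 0 ++ rest = 0 :: (List.replicate m' 0 ++ rest) := by
      simp [List.replicate_succ]
    have st : Step
        (mk s a V (0 :: (List.replicate m' 0 ++ rest)) (A ++ some (0, k + 1) :: B))
        (mk s a V (List.replicate m' 0 ++ rest)
          (A ++ (if k + 1 ≤ 1 then none else some (0, k)) :: B)) := by
      have := step_auto (s:=s) (a:=a) (V:=V) (S := A ++ some (0, k+1) :: B)
        0 (List.replicate m' 0 ++ rest) A.length (k+1)
        rfl (get?_append_cons A _ B)
      rwa [set_append_cons] at this
    rw [hq]
    rcases Nat.eq_zero_or_pos k with rfl | hk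
    · simp only [Nat.le_refl, if_pos] at st
      have : m' + 1 - (0 + 1) = m' := by omega
      rw [this]
      exact Relation.ReflTransGen.single st
    · have hif : (if k + 1 ≤ 1 then (none : Option (ℕ × ℕ)) else some (0, k)) = some (0, k) := by
        have : ¬ (k + 1 ≤ 1) := by omega
        simp [this]
      rw [hif] at st
      have hm : m' + 1 - (k + 1) = m' - k := by omega
      rw [hm]
      exact Relation.ReflTransGen.head st (ih m' hk (by omega))

lemma zeroPhase (s : ℕ) (a : ℕ → ℕ) (rest : List ℕ)
    (A : List (Option (ℕ × ℕ))) (hA : ∀ sp ∈ A, ∀ k, sp ≠ some (0, k)) :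
    ∀ (c : ℕ) (F : Finset ℕ) (V : Finset ℕ), F.card = c → F.Nonempty →
    (∀ i ∈ F, Nat.pair 0 i ∈ V ∧ 1 ≤ a i) →
    Reach (mk s a V (List.replicate (∑ i ∈ F, a i) 0 ++ rest) (A ++ [none]))
          (mk s a (V \ F.image (Nat.pair 0)) rest (A ++ [none])) := by
  intro c
  induction c with
  | zero => intro F V hc hne; exact absurd (Finset.card_eq_zero.1 hc) hne.ne_empty
  | succ c ih =>
    intro F V hc hne hF
    obtain ⟨i, hi⟩ := hne
    have hsum : ∑ j ∈ F, a j = a i + ∑ j ∈ F.erase i, a j :=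
      (Finset.add_sum_erase F a hi).symm
    have hai := (hF i hi).2
    have hq : List.replicate (∑ j ∈ F, a j) 0 ++ rest
        = 0 :: (List.replicate (∑ j ∈ F, a j - 1) 0 ++ rest) := by
      have h1 : ∑ j ∈ F, a j = (∑ j ∈ F, a j - 1) + 1 := by omega
      rw [h1, List.replicate_succ]; simp
    have hlab : L s a (Nat.pair 0 i) = (0, a i) := by simp [L]
    have hna : ¬ AutoApplicable (mk s a V
        (0 :: (List.replicate (∑ j ∈ F, a j - 1) 0 ++ rest)) (A ++ [none])) := by
      refine notAuto ?_
      intro sp hsp k he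
      rcases List.mem_append.1 hsp with h | h
      · exact hA sp h k he
      · simp only [List.mem_singleton] at h; subst h; exact absurd he (by simp)
    have st1 : Step
        (mk s a V (0 :: (List.replicate (∑ j ∈ F, a j - 1) 0 ++ rest)) (A ++ [none]))
        (mk s a (V.erase (Nat.pair 0 i))
          (0 :: (List.replicate (∑ j ∈ F, a j - 1) 0 ++ rest)) (A ++ [some (0, a i)])) := by
      have := step_player (Nat.pair 0 i) A.length hna (hF i hi).1 (get?_append_cons A _ [])
      rwa [set_append_cons, hlab] at this
    have hcons := consume s a (V.erase (Nat.pair 0 i)) rest A []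
      (a i) (∑ j ∈ F, a j) hai (by omega)
    rw [hq]
    refine Relation.ReflTransGen.head st1 ?_
    have hq2 : (0 : ℕ) :: (List.replicate (∑ j ∈ F, a j - 1) 0 ++ rest)
        = List.replicate (∑ j ∈ F, a j) 0 ++ rest := hq.symm
    rw [hq2]
    refine Relation.ReflTransGen.trans hcons ?_
    have hrem : ∑ j ∈ F, a j - a i = ∑ j ∈ F.erase i, a j := by omega
    rw [hrem]
    rcases (F.erase i).eq_empty_or_nonempty with he | hne'
    · have hF1 : F = {i} := by
        rcases (Finset.erase_eq_empty_iff F i).1 he with h | h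
        · exact absurd h (Finset.nonempty_iff_ne_empty.1 ⟨i, hi⟩)
        · exact h
      have : (∑ j ∈ F.erase i, a j) = 0 := by rw [he]; simp
      rw [this]
      have hVeq : V.erase (Nat.pair 0 i) = V \ F.image (Nat.pair 0) := by
        rw [hF1]; simp [Finset.erase_eq]
      rw [hVeq]
      exact Relation.ReflTransGen.refl
    · have hmain := ih (F.erase i) (V.erase (Nat.pair 0 i))
        (by rw [Finset.card_erase_of_mem hi, hc]; rfl) hne'
        (fun j hj => ⟨Finset.mem_erase.2 ⟨by
            intro he2
            exact (Finset.mem_erase.1 hj).1 ((Nat.pair_eq_pair.1 he2).2),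
          (hF j (Finset.mem_of_mem_erase hj)).1⟩,
          (hF j (Finset.mem_of_mem_erase hj)).2⟩)
      have hVeq : V.erase (Nat.pair 0 i) \ (F.erase i).image (Nat.pair 0)
          = V \ F.image (Nat.pair 0) := by
        have himg : F.image (Nat.pair 0)
            = insert (Nat.pair 0 i) ((F.erase i).image (Nat.pair 0)) := by
          conv_lhs => rw [← Finset.insert_erase hi]
          rw [Finset.image_insert]
        rw [himg]
        ext v
        simp only [Finset.mem_sdiff, Finset.mem_erase, Finset.mem_insert]
        tauto
      rw [hVeq] at hmain
      exact hmain

end BO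
namespace BO

lemma drain (s : ℕ) (a : ℕ → ℕ) (V : Finset ℕ) (rest : List ℕ) :
    ∀ (m t : ℕ), t + m + 1 = s →
    Reach (mk s a V (List.range' (t + 1) m ++ rest)
            (List.replicate t none ++ ((List.range' (t + 1) m).map fun y => some (y, 1)) ++ [none]))
          (mk s a V rest (List.replicate s none)) := by
  intro m
  induction m with
  | zero =>
    intro t ht
    have he : List.replicate t (none : Option (ℕ × ℕ))
        ++ ((List.range' (t+1) 0).map fun y => some (y, 1)) ++ [none]
        = List.replicate s none := by
      rw [← ht]; simp [List.replicate_succ']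
    rw [show List.range' (t+1) 0 ++ rest = rest by simp, he]
  | succ m ih =>
    intro t ht
    have hq : List.range' (t + 1) (m + 1) = (t + 1) :: List.range' (t + 2) m := by
      rw [List.range'_succ (s := t+1) (n := m) (step := 1)]
    have hmap : ((List.range' (t + 1) (m+1)).map fun y => (some (y, 1) : Option (ℕ × ℕ)))
        = some (t+1, 1) :: ((List.range' (t + 2) m).map fun y => some (y, 1)) := by
      rw [hq]; rfl
    have st : Step
        (mk s a V ((t+1) :: (List.range' (t + 2) m ++ rest))
          (List.replicate t none ++ some (t+1,1) :: (((List.range' (t + 2) m).map fun y => some (y, 1)) ++ [none])))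
        (mk s a V (List.range' (t + 2) m ++ rest)
          (List.replicate t none ++ none :: (((List.range' (t + 2) m).map fun y => some (y, 1)) ++ [none]))) := by
      have := step_auto (s:=s) (a:=a) (V:=V)
        (S := List.replicate t none ++ some (t+1,1) :: (((List.range' (t + 2) m).map fun y => some (y, 1)) ++ [none]))
        (t+1) (List.range' (t + 2) m ++ rest) t 1
        rfl (get?_append_cons' (List.replicate t (none : Option (ℕ × ℕ))) _ _ t (by simp))
      rw [set_append_cons' (List.replicate t (none : Option (ℕ × ℕ))) _ _ _ t (by simp)] at this
      simpa using this
    have heq1 : List.replicate t (none : Option (ℕ×ℕ)) ++ ((List.range' (t + 1) (m+1)).map fun y => some (y, 1)) ++ [none]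
        = List.replicate t none ++ some (t+1,1) :: (((List.range' (t + 2) m).map fun y => some (y, 1)) ++ [none]) := by
      rw [hmap]; simp
    have heq2 : List.replicate t (none : Option (ℕ×ℕ)) ++ none :: (((List.range' (t + 2) m).map fun y => some (y, 1)) ++ [none])
        = List.replicate (t+1) none ++ ((List.range' (t + 2) m).map fun y => some (y, 1)) ++ [none] := by
      rw [List.replicate_succ']; simp
    rw [heq1, hq, List.cons_append]
    refine Relation.ReflTransGen.head st ?_
    rw [heq2]
    exact ih (t+1) (by omega)

lemma segment (T s : ℕ) (a : ℕ → ℕ) (hs : 1 ≤ s) (hT : 0 < T) (g : ℕ)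
    (V : Finset ℕ) (rest : List ℕ)
    (hb : ∀ j, 1 ≤ j → j ≤ s - 1 → Nat.pair j g ∈ V)
    (hw : Nat.pair s g ∈ V)
    (F : Finset ℕ) (hFne : F.Nonempty)
    (hF : ∀ i ∈ F, Nat.pair 0 i ∈ V ∧ 1 ≤ a i)
    (hFsum : ∑ i ∈ F, a i = T) :
    Reach (mk s a V
            ((List.range' 1 (s-1) ++ List.replicate T 0 ++ [s] ++ List.range' 1 (s-1)) ++ rest)
            (List.replicate s none))
          (mk s a
            (((V \ ((Finset.Ico 1 s).image (fun j => Nat.pair j g)))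
              \ (F.image (Nat.pair 0))) \ ({Nat.pair s g} : Finset ℕ))
            rest (List.replicate s none)) := by
  -- Phase A: fill
  have hfill := fill s a (List.replicate T 0 ++ [s] ++ List.range' 1 (s-1) ++ rest)
    (s-1) 0 V (fun j => Nat.pair j g)
    (fun c h1 h2 => ⟨hb c h1 (by omega), by
      have hc0 : c ≠ 0 := by omega
      have hcs : c ≠ s := by omega
      simp [L, Nat.unpair_pair, hc0, hcs]⟩)
    (fun c c' _ _ _ _ he => (Nat.pair_eq_pair.1 he).1)
  rw [zero_add] at hfill
  have hIco : Finset.Ico 1 (1 + (s-1)) = Finset.Ico 1 s := by congr 1; omega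
  rw [hIco] at hfill
  set V1 := V \ ((Finset.Ico 1 s).image fun j => Nat.pair j g) with hV1
  -- Phase B: zero buses
  have hzero := zeroPhase s a ([s] ++ List.range' 1 (s-1) ++ rest) (Pfx (s-1))
    (Pfx_no0 (s-1)) F.card F V1 rfl hFne
    (fun i hi => ⟨by
      refine Finset.mem_sdiff.2 ⟨(hF i hi).1, ?_⟩
      intro hmem
      obtain ⟨j, hj, he⟩ := Finset.mem_image.1 hmem
      have := (Nat.pair_eq_pair.1 he.symm).1
      have := (Finset.mem_Ico.1 hj).1
      omega, (hF i hi).2⟩)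
  rw [hFsum] at hzero
  set V2 := V1 \ F.image (Nat.pair 0) with hV2
  -- Phase C: s-bus and drain
  have hw2 : Nat.pair s g ∈ V2 := by
    refine Finset.mem_sdiff.2 ⟨Finset.mem_sdiff.2 ⟨hw, ?_⟩, ?_⟩
    · intro hmem
      obtain ⟨j, hj, he⟩ := Finset.mem_image.1 hmem
      have := (Nat.pair_eq_pair.1 he.symm).1
      have := (Finset.mem_Ico.1 hj).2
      omega
    · intro hmem
      obtain ⟨i, _, he⟩ := Finset.mem_image.1 hmem
      have := (Nat.pair_eq_pair.1 he).1
      omega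
  have hlabw : L s a (Nat.pair s g) = (s, 1) := by
    have hs0 : s ≠ 0 := by omega
    simp [L, Nat.unpair_pair, hs0]
  have hnaS : ¬ AutoApplicable (mk s a V2
      (s :: (List.range' 1 (s-1) ++ rest)) (Pfx (s-1) ++ [none])) := by
    refine notAuto ?_
    intro sp hsp k he
    rcases List.mem_append.1 hsp with h | h
    · exact Pfx_no (s-1) s (by omega) sp h k he
    · simp only [List.mem_singleton] at h; subst h; exact absurd he (by simp)
  have st1 : Step
      (mk s a V2 (s :: (List.range' 1 (s-1) ++ rest)) (Pfx (s-1) ++ [none]))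
      (mk s a (V2.erase (Nat.pair s g)) (s :: (List.range' 1 (s-1) ++ rest))
        (Pfx (s-1) ++ [some (s, 1)])) := by
    have := step_player (Nat.pair s g) (Pfx (s-1)).length hnaS hw2
      (get?_append_cons (Pfx (s-1)) _ [])
    rwa [set_append_cons, hlabw] at this
  have st2 : Step
      (mk s a (V2.erase (Nat.pair s g)) (s :: (List.range' 1 (s-1) ++ rest))
        (Pfx (s-1) ++ [some (s, 1)]))
      (mk s a (V2.erase (Nat.pair s g)) (List.range' 1 (s-1) ++ rest)
        (Pfx (s-1) ++ [none])) := by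
    have := step_auto (s:=s) (a:=a) (V:=V2.erase (Nat.pair s g))
      (S := Pfx (s-1) ++ [some (s, 1)])
      s (List.range' 1 (s-1) ++ rest) (Pfx (s-1)).length 1
      rfl (get?_append_cons (Pfx (s-1)) _ [])
    rw [set_append_cons] at this
    simpa using this
  have hdrain := drain s a (V2.erase (Nat.pair s g)) rest (s-1) 0 (by omega)
  have hSeq : List.replicate 0 (none : Option (ℕ×ℕ))
      ++ ((List.range' 1 (s-1)).map fun y => some (y, 1)) ++ [none]
      = Pfx (s-1) ++ [none] := by
    simp [Pfx]
  rw [hSeq, show (0:ℕ)+1 = 1 from rfl] at hdrain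
  -- assemble
  have hVfin : V2.erase (Nat.pair s g) = V2 \ {Nat.pair s g} := Finset.erase_eq _ _
  simp only [List.append_assoc, List.cons_append, List.nil_append]
  refine Relation.ReflTransGen.trans ?_ (Relation.ReflTransGen.trans hzero ?_)
  · rw [show s - 1 + 1 = s from by omega] at hfill
    simp only [zero_add, List.append_assoc, List.cons_append, List.singleton_append,
      List.nil_append, show Pfx 0 = ([] : List (Option (ℕ × ℕ))) from rfl] at hfill ⊢
    exact hfill
  · rw [← hVfin]
    exact Relation.ReflTransGen.head st1 (Relation.ReflTransGen.head st2 hdrain)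

end BO
namespace BO

def Vstage (n s : ℕ) (f : ℕ → ℕ) (g : ℕ) : Finset ℕ :=
  ((Finset.range (3 * n)).filter (fun i => g ≤ f i)).image (Nat.pair 0) ∪
    (Finset.Icc 1 s).biUnion fun j => (Finset.Ico g n).image (Nat.pair j)

lemma stages (n T s : ℕ) (a : ℕ → ℕ) (hs : 1 ≤ s) (hT : 0 < T)
    (hpos : ∀ i < 3 * n, 0 < a i) (f : ℕ → ℕ)
    (hf1 : ∀ i < 3 * n, f i < n)
    (hf2 : ∀ g < n, ((Finset.range (3 * n)).filter (fun i => f i = g)).card = 3 ∧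
      ((Finset.range (3 * n)).filter (fun i => f i = g)).sum a = T) :
    ∀ k g, g + k = n →
    Reach (mk s a (Vstage n s f g)
            ((List.replicate k
              (List.range' 1 (s-1) ++ List.replicate T 0 ++ [s] ++ List.range' 1 (s-1))).flatten)
            (List.replicate s none))
          (mk s a ∅ [] (List.replicate s none)) := by
  intro k
  induction k with
  | zero =>
    intro g hg
    have hg' : g = n := by omega
    have hV : Vstage n s f g = ∅ := by
      ext v
      simp only [Vstage, Finset.mem_union, Finset.mem_image, Finset.mem_biUnion,
        Finset.mem_filter, Finset.mem_range, Finset.mem_Ico, Finset.notMem_empty,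
        iff_false]
      rintro (⟨i, ⟨hi3, hgi⟩, rfl⟩ | ⟨j, hj, m, hm, rfl⟩)
      · have := hf1 i hi3; omega
      · omega
    rw [hV]
    exact Relation.ReflTransGen.refl
  | succ k ih =>
    intro g hg
    have hgn : g < n := by omega
    set seg := List.range' 1 (s-1) ++ List.replicate T 0 ++ [s] ++ List.range' 1 (s-1) with hseg
    have hflat : (List.replicate (k+1) seg).flatten = seg ++ (List.replicate k seg).flatten := by
      rw [List.replicate_succ, List.flatten_cons]
    set F := (Finset.range (3 * n)).filter (fun i => f i = g) with hFdef
    have hseg' := segment T s a hs hT g (Vstage n s f g) ((List.replicate k seg).flatten)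
      (fun j h1 h2 => by
        apply Finset.mem_union_right
        refine Finset.mem_biUnion.2 ⟨j, Finset.mem_Icc.2 ⟨h1, by omega⟩,
          Finset.mem_image.2 ⟨g, Finset.mem_Ico.2 ⟨le_rfl, hgn⟩, rfl⟩⟩)
      (by
        apply Finset.mem_union_right
        exact Finset.mem_biUnion.2 ⟨s, Finset.mem_Icc.2 ⟨hs, le_rfl⟩,
          Finset.mem_image.2 ⟨g, Finset.mem_Ico.2 ⟨le_rfl, hgn⟩, rfl⟩⟩)
      F
      (Finset.card_pos.1 (by rw [(hf2 g hgn).1]; norm_num))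
      (fun i hi => by
        have hi' := Finset.mem_filter.1 hi
        refine ⟨Finset.mem_union_left _ ?_, hpos i (Finset.mem_range.1 hi'.1)⟩
        exact Finset.mem_image.2 ⟨i, Finset.mem_filter.2 ⟨hi'.1, hi'.2 ▸ le_rfl⟩, rfl⟩)
      (hf2 g hgn).2
    have hVeq : ((Vstage n s f g \ ((Finset.Ico 1 s).image (fun j => Nat.pair j g)))
        \ (F.image (Nat.pair 0))) \ ({Nat.pair s g} : Finset ℕ) = Vstage n s f (g+1) := by
      ext v
      simp only [Finset.mem_sdiff, Finset.mem_singleton, Vstage, Finset.mem_union,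
        Finset.mem_image, Finset.mem_biUnion, Finset.mem_filter, Finset.mem_range,
        Finset.mem_Ico, Finset.mem_Icc, hFdef, not_exists, not_and]
      constructor
      · rintro ⟨⟨⟨hmem, hIco⟩, hFim⟩, hsg⟩
        rcases hmem with ⟨i, ⟨hi3, hgi⟩, rfl⟩ | ⟨j, hj, m, hm, rfl⟩
        · left
          refine ⟨i, ⟨hi3, ?_⟩, rfl⟩
          by_cases hfi : f i = g
          · exact absurd rfl (hFim i ⟨hi3, hfi⟩)
          · omega
        · right
          refine ⟨j, hj, m, ⟨?_, hm.2⟩, rfl⟩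
          rcases Nat.lt_or_ge m (g+1) with hmg | hmg
          · have hmg' : m = g := by omega
            subst hmg'
            by_cases hjs : j < s
            · exact absurd rfl (hIco j ⟨hj.1, hjs⟩)
            · have : j = s := by omega
              subst this
              exact absurd rfl hsg
          · exact hmg
      · rintro (⟨i, ⟨hi3, hgi⟩, rfl⟩ | ⟨j, hj, m, hm, rfl⟩)
        · refine ⟨⟨⟨Or.inl ⟨i, ⟨hi3, by omega⟩, rfl⟩, ?_⟩, ?_⟩, ?_⟩
          · intro j hj he
            have := (Nat.pair_eq_pair.1 he).1
            omega
          · intro i' hi' he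
            have h1 := (Nat.pair_eq_pair.1 he).2
            subst h1
            omega
          · intro he
            have := (Nat.pair_eq_pair.1 he).1
            omega
        · refine ⟨⟨⟨Or.inr ⟨j, hj, m, ⟨by omega, hm.2⟩, rfl⟩, ?_⟩, ?_⟩, ?_⟩
          · intro j' hj' he
            have := (Nat.pair_eq_pair.1 he).2
            omega
          · intro i' hi' he
            have := (Nat.pair_eq_pair.1 he).1
            omega
          · intro he
            have := (Nat.pair_eq_pair.1 he).2
            omega
    rw [hVeq] at hseg'
    rw [hflat]
    exact Relation.ReflTransGen.trans hseg' (ih (g+1) (by omega))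

end BO

/-- Forward direction of the congestion-free reduction with `s` spots and
`s+1` colors: a 3-partition yields a solution. -/
theorem threePartition_to_edgeless (n T s : ℕ) (a : ℕ → ℕ)
    (hs : 1 ≤ s) (hn : 0 < n) (hT : 0 < T)
    (hpos : ∀ i < 3 * n, 0 < a i)
    (hsum : ∑ i ∈ Finset.range (3 * n), a i = n * T)
    (hpart : HasPartition n T a) :
    Solvable (Bconf n T s a) := by
  obtain ⟨f, hf1, hf2⟩ := hpart
  have hpos' : ∀ i < 3 * n, 0 < a i := hpos
  have hV : (((Finset.range (3 * n)).image fun i => Nat.pair 0 i) ∪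
      ((Finset.Icc 1 s).biUnion fun j =>
        (Finset.range n).image fun m => Nat.pair j m))
      = BO.Vstage n s f 0 := by
    ext v
    simp only [BO.Vstage, Finset.mem_union, Finset.mem_image, Finset.mem_biUnion,
      Finset.mem_filter, Finset.mem_range, Finset.mem_Ico, Finset.mem_Icc,
      Nat.zero_le, true_and, and_true]
  have hconf : Bconf n T s a = BO.mk s a (BO.Vstage n s f 0)
      ((List.replicate n
        (List.range' 1 (s - 1) ++ List.replicate T 0 ++ [s]
          ++ List.range' 1 (s - 1))).flatten)
      (List.replicate s none) := by
    rw [show Bconf n T s a = BO.mk s a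
      ((((Finset.range (3 * n)).image fun i => Nat.pair 0 i) ∪
        ((Finset.Icc 1 s).biUnion fun j =>
          (Finset.range n).image fun m => Nat.pair j m)))
      ((List.replicate n
        (List.range' 1 (s - 1) ++ List.replicate T 0 ++ [s]
          ++ List.range' 1 (s - 1))).flatten)
      (List.replicate s none) from rfl, hV]
  refine ⟨BO.mk s a ∅ [] (List.replicate s none), ?_, rfl, rfl,
    fun sp h => List.eq_of_mem_replicate h⟩
  rw [hconf]
  exact BO.stages n T s a hs hT hpos f hf1 hf2 n 0 (by omega)
end
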